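/- Let s, t be coprime integers greater than 1. If σ is an s-core partition, then the t-core of σ is also an s-core (Olsson's theorem). -/

import Mathlib

/-!
Removing a rim `h`-hook moves a bead of the beta-set from `b` to the gap `b - h`, so a partition is
an `h`-core exactly when its beta-set is closed under `b ↦ b - h`. On the `t`-abacus, the charge
of a position `x` (beads at or above `x` on its runner minus gaps below `x` on it) is unchanged by
removing rim `t`-hooks, and for a set closed under `b ↦ b - t` it is positive exactly at the
members. If the beta-set of `σ` is closed under `b ↦ b - s`, the charge can only grow from `x` to
`x - s`; since the `t`-core of `σ` has the same charges as `σ`, its beta-set is closed under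
`b ↦ b - s` as well.
-/

/-- A partition, given as a weakly decreasing finitely-supported sequence of
natural numbers (`parts 0` is the first part). -/
structure YPartition where
  parts : ℕ →₀ ℕ
  antitone : ∀ ⦃i j : ℕ⦄, i ≤ j → parts j ≤ parts i

namespace YPartition

/-- The size `|λ|` of a partition. -/
def size (l : YPartition) : ℕ := l.parts.sum fun _ v => v

/-- The beta-set `β(λ) = { λ_r − r : r ≥ 1 }` (here 0-indexed). -/
def betaSet (l : YPartition) : Set ℤ :=
  Set.range fun r : ℕ => (l.parts r : ℤ) - (r + 1)

/-- `RemoveHook h l m` : `m` is obtained from `l` by removing a rim `h`-hook;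
in beta-set terms, an element `b` of `β(l)` is replaced by `b − h ∉ β(l)`. -/
def RemoveHook (h : ℕ) (l m : YPartition) : Prop :=
  ∃ b : ℤ, b ∈ l.betaSet ∧ b - (h : ℤ) ∉ l.betaSet ∧
    m.betaSet = insert (b - (h : ℤ)) (l.betaSet \ {b})

/-- `l` is an `s`-core: no rim `s`-hook can be removed. -/
def IsCore (s : ℕ) (l : YPartition) : Prop := ∀ m : YPartition, ¬ RemoveHook s l m

/-- `c` is the `s`-core of `l`: it is obtained from `l` by repeatedly removing
rim `s`-hooks, and is itself an `s`-core. -/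
def HasCore (s : ℕ) (l c : YPartition) : Prop :=
  Relation.ReflTransGen (RemoveHook s) l c ∧ IsCore s c

/-- `IsConj l m` : `m` is the conjugate partition of `l`. -/
def IsConj (l m : YPartition) : Prop :=
  ∀ r : ℕ, m.parts r = Set.ncard {c : ℕ | r + 1 ≤ l.parts c}

end YPartition

/-- The region `U_x = { x + as + bt : a, b > 0 }`. -/
def UpSet (s t : ℕ) (x : ℤ) : Set ℤ :=
  {n : ℤ | ∃ a b : ℕ, 0 < a ∧ 0 < b ∧ n = x + (a : ℤ) * s + (b : ℤ) * t}

/-- The region `L_x = { x − as − bt : a, b ≥ 0 }`. -/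
def LowSet (s t : ℕ) (x : ℤ) : Set ℤ :=
  {n : ℤ | ∃ a b : ℕ, n = x - (a : ℤ) * s - (b : ℤ) * t}

/-- `x` is a pinch-point for `l` : `L_x ⊆ β(l)` and `β(l) ∩ U_x = ∅`. -/
def PinchPoint (s t : ℕ) (x : ℤ) (l : YPartition) : Prop :=
  LowSet s t x ⊆ l.betaSet ∧ l.betaSet ∩ UpSet s t x = ∅

/-- The generator `w_i` of the affine symmetric group `W_s` in its level-`t`
action on `ℤ` : `n ↦ n + t` if `n ≡ (i−1)t − (s−1)(t−1)/2 (mod s)`,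
`n ↦ n − t` if `n ≡ it − (s−1)(t−1)/2 (mod s)`, and `n ↦ n` otherwise. -/
def wgen (s t : ℕ) (i : ℤ) : ℤ → ℤ := fun n =>
  if (s : ℤ) ∣ (n + ((s : ℤ) - 1) * ((t : ℤ) - 1) / 2 - (i - 1) * t) then n + t
  else if (s : ℤ) ∣ (n + ((s : ℤ) - 1) * ((t : ℤ) - 1) / 2 - i * t) then n - t
  else n

/-- The monoid of maps `ℤ → ℤ` generated by the `wgen s t i`.  Since each
generator is an involution, this is the image of the level-`t` action
of the affine symmetric group `W_s` on `ℤ`. -/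
def WMon (s t : ℕ) : Submonoid (Function.End ℤ) :=
  Submonoid.closure {f | ∃ i : ℤ, f = wgen s t i}

/-- `l` is `(s,t)`-minimal: no partition of smaller size has the same
`s`-core and `t`-core. -/
def MinimalPart (s t : ℕ) (l : YPartition) : Prop :=
  ∀ (m σ τ : YPartition), YPartition.HasCore s l σ → YPartition.HasCore t l τ →
    YPartition.HasCore s m σ → YPartition.HasCore t m τ → l.size ≤ m.size

open Set Function

namespace NatSeq

variable {α : Type*}

def eraseIdx (g : ℕ → α) (i : ℕ) : ℕ → α := fun r => if r < i then g r else g (r + 1)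

def insertIdx (g : ℕ → α) (i : ℕ) (c : α) : ℕ → α :=
  fun r => if r < i then g r else if r = i then c else g (r - 1)

theorem range_eraseIdx {g : ℕ → α} (hg : Injective g) (i : ℕ) :
    range (eraseIdx g i) = range g \ {g i} := by
  ext a
  constructor
  · rintro ⟨r, rfl⟩
    unfold eraseIdx
    split_ifs with hr
    · exact ⟨mem_range_self r, fun he => by have := hg he; omega⟩
    · exact ⟨mem_range_self (r + 1), fun he => by have := hg he; omega⟩
  · rintro ⟨⟨r, rfl⟩, hr⟩
    have hri : r ≠ i := by rintro rfl; exact hr rfl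
    rcases lt_or_gt_of_ne hri with h | h
    · exact ⟨r, if_pos h⟩
    · exact ⟨r - 1, by rw [eraseIdx, if_neg (by omega), Nat.sub_add_cancel (by omega)]⟩

theorem range_insertIdx (g : ℕ → α) (i : ℕ) (c : α) :
    range (insertIdx g i c) = insert c (range g) := by
  ext a
  constructor
  · rintro ⟨r, rfl⟩
    unfold insertIdx
    split_ifs
    · exact Or.inr (mem_range_self r)
    · exact Or.inl rfl
    · exact Or.inr (mem_range_self (r - 1))
  · rintro (rfl | ⟨r, rfl⟩)
    · exact ⟨i, by simp [insertIdx]⟩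
    · rcases lt_or_ge r i with h | h
      · exact ⟨r, if_pos h⟩
      · exact ⟨r + 1, by rw [insertIdx, if_neg (by omega), if_neg (by omega), Nat.add_sub_cancel]⟩

variable [Preorder α] {g : ℕ → α}

theorem strictAnti_eraseIdx (hg : StrictAnti g) (i : ℕ) : StrictAnti (eraseIdx g i) :=
  strictAnti_nat_of_succ_lt fun r => by
    unfold eraseIdx
    split_ifs <;> exact hg (by omega)

theorem strictAnti_insertIdx {i : ℕ} {c : α} (hg : StrictAnti g) (hlt : ∀ r < i, c < g r)
    (hgt : g i < c) : StrictAnti (insertIdx g i c) :=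
  strictAnti_nat_of_succ_lt fun r => by
    simp only [insertIdx]
    rcases lt_trichotomy (r + 1) i with h | h | h
    · rw [if_pos h, if_pos (by omega)]
      exact hg (by omega)
    · rw [if_neg (by omega), if_pos h, if_pos (by omega)]
      exact hlt r (by omega)
    · rcases eq_or_lt_of_le (show i ≤ r by omega) with rfl | h'
      · rw [if_neg (by omega), if_neg (by omega), if_neg (by omega), if_pos rfl]
        simpa using hgt
      · rw [if_neg (by omega), if_neg (by omega), if_neg (by omega), if_neg (by omega)]
        exact hg (by omega)

theorem exists_insertion_index {α : Type*} [LinearOrder α] {g : ℕ → α} {c : α}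
    (hc : c ∉ range g) (h : ∃ r, g r < c) : ∃ i, (∀ r < i, c < g r) ∧ g i < c := by
  classical
  exact ⟨Nat.find h, fun r hr => lt_of_le_of_ne (not_lt.1 (Nat.find_min h hr))
    fun he => hc ⟨r, he.symm⟩, Nat.find_spec h⟩

end NatSeq

namespace YPartition

def beta (l : YPartition) (r : ℕ) : ℤ := (l.parts r : ℤ) - (r + 1)

theorem beta_strictAnti (l : YPartition) : StrictAnti l.beta :=
  strictAnti_nat_of_succ_lt fun r => by
    have := l.antitone (Nat.le_add_right r 1)
    simp only [beta]
    push_cast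
    omega

theorem exists_beta_eq_neg_succ (l : YPartition) : ∃ N : ℕ, ∀ r, N ≤ r → l.beta r = -(r + 1) := by
  obtain ⟨N, hN⟩ := l.parts.support.bddAbove
  refine ⟨N + 1, fun r hr => ?_⟩
  have : r ∉ l.parts.support := fun h => by have := hN h; omega
  simp [beta, Finsupp.notMem_support_iff.1 this]

theorem bddAbove_betaSet (l : YPartition) : BddAbove l.betaSet :=
  ⟨l.beta 0, by
    rintro _ ⟨r, rfl⟩
    exact l.beta_strictAnti.antitone r.zero_le⟩

theorem bddBelow_compl_betaSet (l : YPartition) : BddBelow l.betaSetᶜ := by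
  obtain ⟨N, hN⟩ := l.exists_beta_eq_neg_succ
  refine ⟨-N, fun n hn => ?_⟩
  by_contra h
  exact hn ⟨(-n - 1).toNat, show l.beta _ = n by rw [hN _ (by omega)]; omega⟩

theorem exists_betaSet_eq_range {g : ℕ → ℤ} (hg : StrictAnti g) {N : ℕ}
    (hN : ∀ r, N ≤ r → g r = -(r + 1)) : ∃ l : YPartition, l.betaSet = range g := by
  have hanti : Antitone fun r : ℕ => g r + r :=
    antitone_nat_of_succ_le fun r => by have := hg (Nat.lt_add_one r); push_cast; omega
  have hpos : ∀ r, 0 ≤ g r + r + 1 := fun r => by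
    have := hanti (le_max_left r N)
    have := hN _ (le_max_right r N)
    simp only at *
    omega
  have hsupp : (support fun r => (g r + r + 1).toNat).Finite :=
    (finite_Iio N).subset fun r hr => by
      by_contra h
      exact hr (by simp [hN r (not_lt.1 h)])
  refine ⟨⟨Finsupp.ofSupportFinite _ hsupp, fun i j hij => ?_⟩, ?_⟩
  · simp only [Finsupp.ofSupportFinite_coe]
    have := hanti hij
    simp only at this
    omega
  · ext n
    simp only [betaSet, Finsupp.ofSupportFinite_coe, mem_range]
    refine exists_congr fun r => ?_
    rw [Int.toNat_of_nonneg (hpos r)]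
    constructor <;> intro h <;> omega

theorem exists_betaSet_eq_insert_diff (l : YPartition) {b c : ℤ} (hb : b ∈ l.betaSet)
    (hc : c ∉ l.betaSet) : ∃ m : YPartition, m.betaSet = insert c (l.betaSet \ {b}) := by
  obtain ⟨i, rfl⟩ : ∃ i, l.beta i = b := hb
  obtain ⟨N, hN⟩ := l.exists_beta_eq_neg_succ
  have hg := l.beta_strictAnti
  set e := NatSeq.eraseIdx l.beta i
  have he : range e = l.betaSet \ {l.beta i} := NatSeq.range_eraseIdx hg.injective i
  have hce : c ∉ range e := by rw [he]; exact fun h => hc h.1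
  obtain ⟨k, hlt, hgt⟩ := NatSeq.exists_insertion_index hce
    ⟨max i N + (-c).toNat, by
      have := hN (max i N + (-c).toNat + 1) (by omega)
      simp only [e, NatSeq.eraseIdx]
      rw [if_neg (by omega), this]
      omega⟩
  obtain ⟨m, hm⟩ := exists_betaSet_eq_range
    (NatSeq.strictAnti_insertIdx (NatSeq.strictAnti_eraseIdx hg i) hlt hgt)
    (N := max N (max i k + 1)) fun r hr => by
      simp only [NatSeq.insertIdx, NatSeq.eraseIdx]
      rw [if_neg (by omega), if_neg (by omega), if_neg (by omega), Nat.sub_add_cancel (by omega)]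
      exact hN r (by omega)
  exact ⟨m, by rw [hm, NatSeq.range_insertIdx, he]⟩

end YPartition

theorem Nat.ncard_setOf_eq_ncard_setOf_succ_add (p : ℕ → Prop) [DecidablePred p]
    (hp : {k | p k}.Finite) :
    ({k | p k}.ncard : ℤ) = {k | p (k + 1)}.ncard + if p 0 then 1 else 0 := by
  have himage : Nat.succ '' {k | p (k + 1)} = {k | p k} \ {0} := by
    ext k
    cases k <;> simp
  rw [← Set.ncard_image_of_injective {k | p (k + 1)} Nat.succ_injective, himage]
  split_ifs with h0
  · rw [← Set.ncard_sdiff_singleton_add_one (show 0 ∈ {k | p k} from h0) hp]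
    push_cast
    ring
  · rw [Set.sdiff_singleton_eq_self (show 0 ∉ {k | p k} from h0)]
    simp

/-- On an abacus with `t` runners, the beads of `S` at or above `x` on the runner of `x`,
minus the gaps strictly below `x` on that runner. -/
noncomputable def runnerCharge (t : ℕ) (S : Set ℤ) (x : ℤ) : ℤ :=
  {k : ℕ | x + k * t ∈ S}.ncard - {k : ℕ | x - (k + 1) * t ∉ S}.ncard

section runnerCharge

variable {t : ℕ} {S : Set ℤ}

theorem finite_setOf_add_mul_mem (ht : 0 < t) (hS : BddAbove S) (x : ℤ) :
    {k : ℕ | x + k * t ∈ S}.Finite := by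
  obtain ⟨B, hB⟩ := hS
  refine (finite_Iic (B - x).toNat).subset fun k hk => ?_
  have := hB hk
  have : (k : ℤ) ≤ k * t := le_mul_of_one_le_right (by positivity) (by exact_mod_cast ht)
  simp only [mem_Iic]
  omega

theorem finite_setOf_sub_mul_notMem (ht : 0 < t) (hS : BddBelow Sᶜ) (x : ℤ) :
    {k : ℕ | x - (k + 1) * t ∉ S}.Finite := by
  obtain ⟨B, hB⟩ := hS
  refine (finite_Iic (x - B).toNat).subset fun k hk => ?_
  have := hB hk
  have : (k : ℤ) + 1 ≤ (k + 1) * t := le_mul_of_one_le_right (by positivity) (by exact_mod_cast ht)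
  simp only [mem_Iic]
  omega

theorem sub_nat_mul_mem (hcl : ∀ b ∈ S, b - t ∈ S) {b : ℤ} (hb : b ∈ S) (k : ℕ) :
    b - k * t ∈ S := by
  induction k with
  | zero => simpa using hb
  | succ k ih => simpa [add_mul, sub_add_eq_sub_sub] using hcl _ ih

theorem runnerCharge_congr {S' : Set ℤ} {x : ℤ} (h : ∀ z : ℤ, x + z * t ∈ S ↔ x + z * t ∈ S') :
    runnerCharge t S x = runnerCharge t S' x := by
  have hA : ∀ k : ℕ, x + k * t ∈ S ↔ x + k * t ∈ S' := fun k => h k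
  have hC : ∀ k : ℕ, x - (k + 1) * t ∈ S ↔ x - (k + 1) * t ∈ S' := fun k => by
    have := h (-(k + 1))
    rwa [neg_mul, ← sub_eq_add_neg] at this
  simp only [runnerCharge, hA, hC]

theorem runnerCharge_sub (ht : 0 < t) (hS : BddAbove S) (hS' : BddBelow Sᶜ) (x : ℤ) :
    runnerCharge t S (x - t) = runnerCharge t S x + 1 := by
  classical
  have hA := Nat.ncard_setOf_eq_ncard_setOf_succ_add _ (finite_setOf_add_mul_mem ht hS (x - t))
  have hC := Nat.ncard_setOf_eq_ncard_setOf_succ_add _ (finite_setOf_sub_mul_notMem ht hS' x)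
  have eA : ∀ k : ℕ, x - t + ((k + 1 : ℕ) : ℤ) * t = x + k * t := fun k => by push_cast; ring
  have eC : ∀ k : ℕ, x - ((k + 1 : ℕ) + 1) * t = x - t - (k + 1) * t := fun k => by
    push_cast; ring
  simp only [eA, eC, CharP.cast_eq_zero, zero_mul, add_zero, zero_add, one_mul] at hA hC
  simp only [runnerCharge]
  split_ifs at hA hC <;> omega

theorem runnerCharge_sub_intCast_mul (ht : 0 < t) (hS : BddAbove S) (hS' : BddBelow Sᶜ)
    (x z : ℤ) : runnerCharge t S (x - z * t) = runnerCharge t S x + z := by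
  have hnat : ∀ (x : ℤ) (n : ℕ), runnerCharge t S (x - n * t) = runnerCharge t S x + n := by
    intro x n
    induction n with
    | zero => simp
    | succ n ih =>
      rw [Nat.cast_succ, add_mul, one_mul, ← sub_sub, runnerCharge_sub ht hS hS', ih]
      ring
  rcases Int.eq_nat_or_neg z with ⟨n, rfl | rfl⟩
  · exact hnat x n
  · have := hnat (x + n * t) n
    rw [add_sub_cancel_right] at this
    rw [neg_mul, sub_neg_eq_add, this]
    ring

theorem runnerCharge_le_sub {s : ℕ} (ht : 0 < t) (hS : BddAbove S) (hS' : BddBelow Sᶜ)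
    (hcl : ∀ b ∈ S, b - s ∈ S) (x : ℤ) : runnerCharge t S x ≤ runnerCharge t S (x - s) := by
  have hA : {k : ℕ | x + k * t ∈ S} ⊆ {k : ℕ | x - s + k * t ∈ S} := fun k hk => by
    simpa [sub_add_eq_add_sub] using hcl _ hk
  have hC : {k : ℕ | x - s - (k + 1) * t ∉ S} ⊆ {k : ℕ | x - (k + 1) * t ∉ S} :=
    fun k hk hmem => hk (by simpa [sub_right_comm] using hcl _ hmem)
  have := Set.ncard_le_ncard hA (finite_setOf_add_mul_mem ht hS _)
  have := Set.ncard_le_ncard hC (finite_setOf_sub_mul_notMem ht hS' _)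
  simp only [runnerCharge]
  omega

theorem mem_iff_one_le_runnerCharge (ht : 0 < t) (hS : BddAbove S)
    (hcl : ∀ b ∈ S, b - t ∈ S) (x : ℤ) : x ∈ S ↔ 1 ≤ runnerCharge t S x := by
  constructor
  · intro hx
    have hC : {k : ℕ | x - (k + 1) * t ∉ S} = ∅ := by
      ext k
      have := sub_nat_mul_mem hcl hx (k + 1)
      push_cast at this
      simpa using this
    have hA : 0 < {k : ℕ | x + k * t ∈ S}.ncard :=
      (Set.ncard_pos (finite_setOf_add_mul_mem ht hS x)).2 ⟨0, by simpa using hx⟩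
    simp only [runnerCharge, hC, Set.ncard_empty]
    omega
  · intro h
    by_contra hx
    have hA : {k : ℕ | x + k * t ∈ S} = ∅ := by
      ext k
      simp only [mem_ofPred_eq, mem_empty_iff_false, iff_false]
      exact fun hk => hx (by simpa using sub_nat_mul_mem hcl hk k)
    simp only [runnerCharge, hA, Set.ncard_empty] at h
    omega

theorem runnerCharge_insert_diff_of_forall_sub_mem (ht : 0 < t) {b y : ℤ}
    {n : ℕ} (hb : b ∈ S) (hbt : b - t ∉ S) (hy : b = y + (n + 1) * t)
    (hlow : ∀ k : ℕ, y - (k + 1) * t ∈ S) :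
    runnerCharge t (insert (b - t) (S \ {b})) y = runnerCharge t S y := by
  have ht' : (t : ℤ) ≠ 0 := by positivity
  have hA : {k : ℕ | y + k * t ∈ insert (b - t) (S \ {b})} =
      insert n ({k : ℕ | y + k * t ∈ S} \ {n + 1}) := by
    ext k
    simp only [hy, mem_insert_iff, mem_sdiff, mem_singleton_iff, mem_ofPred_eq]
    rw [show y + (n + 1) * t - t = y + n * t by ring, add_right_inj, add_right_inj,
      mul_left_inj' ht', mul_left_inj' ht']
    norm_cast
  have hC : ∀ S' : Set ℤ, (∀ k : ℕ, y - (k + 1) * t ∈ S') →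
      {k : ℕ | y - (k + 1) * t ∉ S'} = ∅ := fun S' h => by
    ext k
    simpa using h k
  have hlow' : ∀ k : ℕ, y - (k + 1) * t ∈ insert (b - t) (S \ {b}) := fun k =>
    Or.inr ⟨hlow k, fun h => by
      have : (0 : ℤ) < ((k : ℤ) + n + 2) * t := by positivity
      rw [mem_singleton_iff, hy] at h
      linarith⟩
  rw [runnerCharge, runnerCharge, hA, hC _ hlow, hC _ hlow',
    Set.ncard_exchange (fun h : n ∈ {k : ℕ | y + k * t ∈ S} =>
        hbt (by rwa [hy, add_one_mul, ← add_assoc, add_sub_cancel_right]))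
      (show n + 1 ∈ {k : ℕ | y + k * t ∈ S} by simpa [← hy] using hb)]

theorem runnerCharge_insert_diff (ht : 0 < t) (hS : BddAbove S)
    (hS' : BddBelow Sᶜ) {b : ℤ} (hb : b ∈ S) (hbt : b - t ∉ S) (x : ℤ) :
    runnerCharge t (insert (b - t) (S \ {b})) x = runnerCharge t S x := by
  by_cases hx : (t : ℤ) ∣ b - x
  · -- Moving along the runner shifts both charges equally, so compare them at a point
    -- `b - (n + 1) * t` below all gaps of `S`.
    obtain ⟨q, hq⟩ := hx
    obtain ⟨m, hm⟩ := hS'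
    set n := (b - m).toNat
    have hlow : ∀ k : ℕ, b - (n + 1) * t - (k + 1) * t ∈ S := fun k => by
      by_contra h
      have := hm h
      have : ((n : ℤ) + 1) ≤ (n + 1) * t := le_mul_of_one_le_right (by positivity)
        (by exact_mod_cast ht)
      have : (0 : ℤ) ≤ (k + 1) * t := by positivity
      omega
    have hS'bdd : BddAbove (insert (b - t) (S \ {b})) := (hS.mono sdiff_subset).insert _
    have hS'low : BddBelow (insert (b - t) (S \ {b}))ᶜ :=
      (BddBelow.insert b ⟨m, hm⟩).mono fun a ha => by
        by_cases h : a = b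
        · exact Or.inl h
        · exact Or.inr fun haS => ha (Or.inr ⟨haS, h⟩)
    have key := runnerCharge_insert_diff_of_forall_sub_mem ht hb hbt (by ring) hlow
    rw [show b - (n + 1) * t = x - (n + 1 - q) * t by linear_combination hq,
      runnerCharge_sub_intCast_mul ht hS'bdd hS'low,
      runnerCharge_sub_intCast_mul ht hS ⟨m, hm⟩] at key
    linarith
  · refine runnerCharge_congr fun z => ?_
    have h₁ : x + z * t ≠ b := fun h => hx ⟨z, by rw [← h]; ring⟩
    have h₂ : x + z * t ≠ b - t := fun h => hx ⟨z + 1, by linear_combination -h⟩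
    simp [h₁, h₂]

end runnerCharge

namespace YPartition

theorem isCore_iff {h : ℕ} {l : YPartition} :
    IsCore h l ↔ ∀ b ∈ l.betaSet, b - h ∈ l.betaSet := by
  constructor
  · intro hl b hb
    by_contra hbh
    obtain ⟨m, hm⟩ := l.exists_betaSet_eq_insert_diff hb hbh
    exact hl m ⟨b, hb, hbh, hm⟩
  · rintro hcl m ⟨b, hb, hbh, -⟩
    exact hbh (hcl b hb)

theorem runnerCharge_eq_of_reflTransGen {t : ℕ} (ht : 0 < t) {l m : YPartition}
    (h : Relation.ReflTransGen (RemoveHook t) l m) (x : ℤ) :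
    runnerCharge t m.betaSet x = runnerCharge t l.betaSet x := by
  induction h with
  | refl => rfl
  | tail _ hstep ih =>
    obtain ⟨b, hb, hbt, hm⟩ := hstep
    rw [hm, runnerCharge_insert_diff ht (bddAbove_betaSet _) (bddBelow_compl_betaSet _) hb hbt, ih]

end YPartition

theorem stmt6_general (s t : ℕ) (ht : 1 < t)
    (σ τ : YPartition) (hσ : YPartition.IsCore s σ)
    (hτ : YPartition.HasCore t σ τ) :
    YPartition.IsCore s τ := by
  obtain ⟨hchain, hτ⟩ := hτ
  have ht₀ : 0 < t := by omega
  rw [YPartition.isCore_iff] at hσ hτ ⊢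
  intro b hb
  rw [mem_iff_one_le_runnerCharge ht₀ τ.bddAbove_betaSet hτ,
    YPartition.runnerCharge_eq_of_reflTransGen ht₀ hchain] at hb ⊢
  exact hb.trans (runnerCharge_le_sub ht₀ σ.bddAbove_betaSet σ.bddBelow_compl_betaSet hσ b)

/-- Olsson's theorem: the `t`-core of an `s`-core is an `s`-core. -/
theorem stmt6 (s t : ℕ) (hs : 1 < s) (ht : 1 < t) (hst : Nat.Coprime s t)
    (σ τ : YPartition) (hσ : YPartition.IsCore s σ)
    (hτ : YPartition.HasCore t σ τ) :
    YPartition.IsCore s τ :=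
  stmt6_general s t ht σ τ hσ hτ
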